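/- The involution P(z) defined as the unique formal power series with P(z) = -z + O(z^2) satisfying y(q)(1-y(q))^\tau = y(\bar q)(1-y(\bar q))^\tau, where y(q) = 1/(\tau+1) - z and y(\bar q) = 1/(\tau+1) - P(z), has expansion P(z) = -z - (2(\tau^2-1)/(3\tau)) z^2 - (4(\tau^2-1)^2/(9\tau^2)) z^3 + O(z^4), and satisfies P(P(z)) = z. -/

import Mathlib

open PowerSeries

noncomputable section

/-- `(1+u)^τ := ∑_n binom(τ,n) u^n`, the formal binomial power. -/
def binomPow {K : Type*} [Field K] (τ : K) (u : PowerSeries K) : PowerSeries K :=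
  PowerSeries.mk fun m => ∑ n ∈ Finset.range (m + 1),
    ((∏ a ∈ Finset.range n, (τ - (a : K))) / (Nat.factorial n : K)) *
      PowerSeries.coeff m (u ^ n)

/-- Substitution `f(p(z))` of a power series `p` with zero constant term into `f`. -/
def seriesComp {K : Type*} [Field K] (f p : PowerSeries K) : PowerSeries K :=
  PowerSeries.mk fun m => ∑ n ∈ Finset.range (m + 1),
    PowerSeries.coeff n f * PowerSeries.coeff m (p ^ n)

/-- `g(z) = (1/(τ+1) - z)·(1 + ((τ+1)/τ) z)^τ`; the functional equation
`y(q)(1-y(q))^τ = y(q̄)(1-y(q̄))^τ` for `y(q) = 1/(τ+1) - z`, `y(q̄) = 1/(τ+1) - P(z)`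
is (after cancelling the constant factor `(τ/(τ+1))^τ`) exactly `g(P(z)) = g(z)`. -/
def lambertLocal {K : Type*} [Field K] (τ : K) : PowerSeries K :=
  (PowerSeries.C ((τ + 1)⁻¹) - PowerSeries.X) *
    binomPow τ (PowerSeries.C ((τ + 1) / τ) * PowerSeries.X)

/-!
Put `g = lambertLocal τ`. Its coefficients are `g₁ = 0` and `g₂ = -(τ+1)²/(2τ) ≠ 0`: the origin is
a nondegenerate critical point of `g`. Comparing the coefficients of `z³` and `z⁴` in `g ∘ P = g`
for `P = -z + p₂ z² + p₃ z³ + ⋯` gives `p₂ = -g₃/g₂` and `p₃ = -p₂²`.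

For the involution, `Q = P ∘ P` satisfies `g ∘ Q = g` and `Q = z + O(z²)`. Write `Q = z U`. If
`U ≡ 1 mod z^m`, then `(zU)^k - z^k` vanishes to order `k + m`, so only the term `k = 2` of
`g ∘ Q - g = ∑ g_k ((zU)^k - z^k)` reaches `z^(m+2)`, where its coefficient is `2 g₂ (U - 1)_m`.
Hence `U ≡ 1 mod z^(m+1)`, and by induction `U = 1`.
-/

section SeriesComp

variable {K : Type*} [Field K]

theorem coeff_pow_eq_zero_of_lt {p : K⟦X⟧} (hp : constantCoeff p = 0) {m n : ℕ} (h : m < n) :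
    coeff m (p ^ n) = 0 :=
  coeff_of_lt_order m ((Nat.cast_lt.mpr h).trans_le (le_order_pow_of_constantCoeff_eq_zero n hp))

theorem coeff_seriesComp (f p : K⟦X⟧) (m : ℕ) :
    coeff m (seriesComp f p) = ∑ n ∈ Finset.range (m + 1), coeff n f * coeff m (p ^ n) :=
  coeff_mk _ _

theorem seriesComp_eq_subst (f : K⟦X⟧) {p : K⟦X⟧} (hp : constantCoeff p = 0) :
    seriesComp f p = f.subst p := by
  ext m
  rw [coeff_seriesComp, coeff_subst' (HasSubst.of_constantCoeff_zero' hp)]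
  simp only [smul_eq_mul]
  refine (finsum_eq_sum_of_support_subset _ fun n hn => ?_).symm
  by_contra hnm
  simp only [Finset.coe_range, Set.mem_Iio, not_lt] at hnm
  exact hn (by simp only [coeff_pow_eq_zero_of_lt hp (show m < n by omega), mul_zero])

theorem constantCoeff_seriesComp (f p : K⟦X⟧) :
    constantCoeff (seriesComp f p) = constantCoeff f := by
  rw [← coeff_zero_eq_constantCoeff_apply, coeff_seriesComp]
  simp

theorem coeff_one_seriesComp (f p : K⟦X⟧) :
    coeff 1 (seriesComp f p) = coeff 1 f * coeff 1 p := by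
  simp [coeff_seriesComp, Finset.sum_range_succ]

theorem seriesComp_X_right (f : K⟦X⟧) : seriesComp f X = f := by
  rw [seriesComp_eq_subst f constantCoeff_X, X_subst]

theorem seriesComp_assoc (f : K⟦X⟧) {p q : K⟦X⟧} (hp : constantCoeff p = 0)
    (hq : constantCoeff q = 0) :
    seriesComp (seriesComp f p) q = seriesComp f (seriesComp p q) := by
  have hpq : constantCoeff (seriesComp p q) = 0 := by rw [constantCoeff_seriesComp, hp]
  rw [seriesComp_eq_subst _ hq, seriesComp_eq_subst _ hp, seriesComp_eq_subst _ hpq,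
    seriesComp_eq_subst _ hq, subst_comp_subst_apply (HasSubst.of_constantCoeff_zero' hp)
      (HasSubst.of_constantCoeff_zero' hq)]

theorem coeff_seriesComp_sub_coeff (g Q : K⟦X⟧) (m : ℕ) :
    coeff m (seriesComp g Q) - coeff m g =
      ∑ k ∈ Finset.range (m + 1), coeff k g * coeff m (Q ^ k - X ^ k) := by
  nth_rw 2 [← seriesComp_X_right g]
  simp only [coeff_seriesComp, map_sub, mul_sub, Finset.sum_sub_distrib]

end SeriesComp

section Uniqueness

variable {K : Type*} [Field K]

theorem X_pow_add_dvd_X_mul_pow_sub_X_pow {U : K⟦X⟧} {m : ℕ} (hU : X ^ m ∣ U - 1) (k : ℕ) :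
    (X : K⟦X⟧) ^ (k + m) ∣ (X * U) ^ k - X ^ k := by
  rw [mul_pow, ← mul_sub_one, pow_add]
  exact mul_dvd_mul_left _ (hU.trans (sub_one_dvd_pow_sub_one U k))

theorem coeff_X_mul_sq_sub_X_sq {U : K⟦X⟧} {m : ℕ} (hU : X ^ m ∣ U - 1)
    (hU0 : constantCoeff U = 1) :
    coeff (m + 2) ((X * U) ^ 2 - X ^ 2) = 2 * coeff m (U - 1) := by
  obtain ⟨V, hV⟩ := hU
  have hfactor : (X * U) ^ 2 - X ^ 2 = X ^ (m + 2) * (V * (U + 1)) := by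
    linear_combination (X ^ 2 * (U + 1)) * hV
  have hcoeff : coeff m (U - 1) = constantCoeff V := by
    rw [hV, coeff_X_pow_mul', if_pos le_rfl, Nat.sub_self, coeff_zero_eq_constantCoeff_apply]
  rw [hfactor, coeff_X_pow_mul', if_pos le_rfl, Nat.sub_self, coeff_zero_eq_constantCoeff_apply,
    hcoeff, map_mul, map_add, hU0, map_one]
  ring

theorem coeff_seriesComp_X_mul_sub_coeff {g U : K⟦X⟧} {m : ℕ} (hg1 : coeff 1 g = 0)
    (hU : X ^ m ∣ U - 1) (hU0 : constantCoeff U = 1) :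
    coeff (m + 2) (seriesComp g (X * U)) - coeff (m + 2) g =
      coeff 2 g * (2 * coeff m (U - 1)) := by
  rw [coeff_seriesComp_sub_coeff, Finset.sum_eq_single 2, coeff_X_mul_sq_sub_X_sq hU hU0]
  · intro k _ hk2
    obtain rfl | rfl | hk3 : k = 0 ∨ k = 1 ∨ 3 ≤ k := by omega
    · simp
    · rw [hg1, zero_mul]
    · rw [X_pow_dvd_iff.mp (X_pow_add_dvd_X_mul_pow_sub_X_pow hU k) _ (by omega), mul_zero]
  · intro h2
    exact absurd (Finset.mem_range.mpr (by omega)) h2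

theorem eq_X_of_seriesComp_eq_self [NeZero (2 : K)] {g Q : K⟦X⟧} (hg1 : coeff 1 g = 0)
    (hg2 : coeff 2 g ≠ 0) (hQ0 : constantCoeff Q = 0) (hQ1 : coeff 1 Q = 1)
    (h : seriesComp g Q = g) : Q = X := by
  obtain ⟨U, rfl⟩ := X_dvd_iff.mpr hQ0
  have hU0 : constantCoeff U = 1 := by simpa [coeff_succ_X_mul] using hQ1
  suffices hdvd : ∀ m, X ^ (m + 1) ∣ U - 1 by
    have hU : U = 1 := by
      ext m
      simpa [sub_eq_zero] using X_pow_dvd_iff.mp (hdvd m) m (by omega)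
    rw [hU, mul_one]
  intro m
  induction m with
  | zero => simpa [X_dvd_iff, sub_eq_zero] using hU0
  | succ m ih =>
    refine X_pow_dvd_iff.mpr fun i hi => ?_
    obtain hi | rfl : i < m + 1 ∨ i = m + 1 := by omega
    · exact X_pow_dvd_iff.mp ih i hi
    have hlin := coeff_seriesComp_X_mul_sub_coeff (m := m + 1) hg1 ih hU0
    rw [h, sub_self] at hlin
    simpa [hg2, two_ne_zero] using hlin.symm

end Uniqueness

section LowOrder

variable {K : Type*} [Field K]

theorem coeff_three_seriesComp {g p : K⟦X⟧} (hg1 : coeff 1 g = 0) (hp : constantCoeff p = 0) :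
    coeff 3 (seriesComp g p) =
      coeff 2 g * (2 * coeff 1 p * coeff 2 p) + coeff 3 g * coeff 1 p ^ 3 := by
  have hp0 : coeff 0 p = 0 := by rwa [coeff_zero_eq_constantCoeff_apply]
  simp [coeff_seriesComp, Finset.sum_range_succ, pow_succ, coeff_mul,
    Finset.Nat.antidiagonal_succ, hg1, hp0, -add_left_inj, -mul_eq_mul_left_iff]
  ring

theorem coeff_four_seriesComp {g p : K⟦X⟧} (hg1 : coeff 1 g = 0) (hp : constantCoeff p = 0) :
    coeff 4 (seriesComp g p) =
      coeff 2 g * (coeff 2 p ^ 2 + 2 * coeff 1 p * coeff 3 p) +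
        coeff 3 g * (3 * coeff 1 p ^ 2 * coeff 2 p) + coeff 4 g * coeff 1 p ^ 4 := by
  have hp0 : coeff 0 p = 0 := by rwa [coeff_zero_eq_constantCoeff_apply]
  simp [coeff_seriesComp, Finset.sum_range_succ, pow_succ, coeff_mul,
    Finset.Nat.antidiagonal_succ, hg1, hp0, -add_left_inj, -mul_eq_mul_left_iff]
  ring

end LowOrder

theorem coeff_two_three_of_seriesComp_eq_self {K : Type*} [Field K] [NeZero (2 : K)]
    {g p : K⟦X⟧} (hg1 : coeff 1 g = 0) (hg2 : coeff 2 g ≠ 0) (hp0 : constantCoeff p = 0)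
    (hp1 : coeff 1 p = -1) (h : seriesComp g p = g) :
    coeff 2 p = -(coeff 3 g / coeff 2 g) ∧ coeff 3 p = -(coeff 3 g / coeff 2 g) ^ 2 := by
  have h3 := coeff_three_seriesComp hg1 hp0
  have h4 := coeff_four_seriesComp hg1 hp0
  rw [h, hp1] at h3 h4
  have hp2 : coeff 2 p = -(coeff 3 g / coeff 2 g) := by
    have h3' : (2 : K) * (coeff 2 p * coeff 2 g + coeff 3 g) = 0 := by linear_combination h3
    field_simp
    linear_combination (mul_eq_zero.mp h3').resolve_left two_ne_zero
  refine ⟨hp2, ?_⟩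
  rw [hp2] at h4
  have h4' : (2 : K) * (coeff 3 p * coeff 2 g ^ 2 + coeff 3 g ^ 2) = 0 := by
    field_simp at h4
    linear_combination h4
  field_simp
  linear_combination (mul_eq_zero.mp h4').resolve_left two_ne_zero

section Lambert

variable {K : Type*} [Field K]

theorem coeff_binomPow_C_mul_X (τ a : K) (m : ℕ) :
    coeff m (binomPow τ (C a * X)) =
      (∏ i ∈ Finset.range m, (τ - i)) / m.factorial * a ^ m := by
  rw [binomPow, coeff_mk, Finset.sum_eq_single m]
  · rw [mul_pow, ← map_pow, coeff_C_mul, coeff_X_pow, if_pos rfl, mul_one]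
  · intro n _ hnm
    rw [mul_pow, ← map_pow, coeff_C_mul, coeff_X_pow, if_neg (Ne.symm hnm), mul_zero, mul_zero]
  · exact fun h => absurd (Finset.self_mem_range_succ m) h

theorem coeff_succ_lambertLocal [CharZero K] {τ : K} (hτ0 : τ ≠ 0) (hτ1 : τ + 1 ≠ 0) (k : ℕ) :
    coeff (k + 1) (lambertLocal τ) =
      -(k / (k + 1)) * ((∏ i ∈ Finset.range k, (τ - i)) / k.factorial) *
        ((τ + 1) / τ) ^ (k + 1) := by
  rw [lambertLocal, sub_mul, map_sub, coeff_succ_X_mul, coeff_C_mul, coeff_binomPow_C_mul_X,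
    coeff_binomPow_C_mul_X, Finset.prod_range_succ, Nat.factorial_succ, pow_succ]
  have hfact : (k.factorial : K) ≠ 0 := Nat.cast_ne_zero.mpr k.factorial_ne_zero
  generalize (∏ i ∈ Finset.range k, (τ - i)) = B
  generalize ((τ + 1) / τ) ^ k = c
  push_cast
  field_simp
  ring

end Lambert

/-- The deck-transformation series `P(z) = -z + O(z²)` satisfying
`y(q)(1-y(q))^τ = y(q̄)(1-y(q̄))^τ` (with `y(q) = 1/(τ+1) - z`, `y(q̄) = 1/(τ+1) - P(z)`)
has expansion `P(z) = -z - (2(τ²-1)/(3τ)) z² - (4(τ²-1)²/(9τ²)) z³ + O(z⁴)` and is an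
involution: `P(P(z)) = z`. -/
theorem deck_involution {K : Type*} [Field K] [CharZero K]
    (τ : K) (hτ0 : τ ≠ 0) (hτ1 : τ + 1 ≠ 0)
    (P : PowerSeries K)
    (h0 : PowerSeries.constantCoeff P = 0)
    (h1 : PowerSeries.coeff 1 P = -1)
    (heq : seriesComp (lambertLocal τ) P = lambertLocal τ) :
    PowerSeries.coeff 2 P = -(2 * (τ ^ 2 - 1)) / (3 * τ) ∧
    PowerSeries.coeff 3 P = -(4 * (τ ^ 2 - 1) ^ 2) / (9 * τ ^ 2) ∧
    seriesComp P P = PowerSeries.X := by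
  have hg1 : coeff 1 (lambertLocal τ) = 0 := by simpa using coeff_succ_lambertLocal hτ0 hτ1 0
  have hg2 : coeff 2 (lambertLocal τ) = -(τ + 1) ^ 2 / (2 * τ) := by
    rw [coeff_succ_lambertLocal hτ0 hτ1 1]
    norm_num
    field_simp
  have hg3 : coeff 3 (lambertLocal τ) = -((τ - 1) * (τ + 1) ^ 3) / (3 * τ ^ 2) := by
    rw [coeff_succ_lambertLocal hτ0 hτ1 2]
    norm_num [Finset.prod_range_succ, Nat.factorial]
    field_simp
  have hg2_ne : coeff 2 (lambertLocal τ) ≠ 0 := by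
    rw [hg2]
    exact div_ne_zero (neg_ne_zero.mpr (pow_ne_zero 2 hτ1)) (mul_ne_zero two_ne_zero hτ0)
  have hratio :
      coeff 3 (lambertLocal τ) / coeff 2 (lambertLocal τ) = 2 * (τ ^ 2 - 1) / (3 * τ) := by
    rw [hg2, hg3]
    field_simp
    ring
  obtain ⟨hp2, hp3⟩ := coeff_two_three_of_seriesComp_eq_self hg1 hg2_ne h0 h1 heq
  refine ⟨by rw [hp2, hratio, neg_div], by rw [hp3, hratio]; ring, ?_⟩
  refine eq_X_of_seriesComp_eq_self hg1 hg2_ne (by rw [constantCoeff_seriesComp, h0])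
    (by rw [coeff_one_seriesComp, h1, neg_one_mul, neg_neg]) ?_
  rw [← seriesComp_assoc _ h0 h0, heq, heq]

end
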